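/- arXiv:0902.4098 — 2 statements merged into one kernel-verified Lean document; each statement's English description precedes it below -/
import Mathlib

section
/- The rank of the Kirchhoff matrix L of a weighted digraph Γ on n vertices equals n − d, where d is the out-forest dimension of Γ (the number of weak components in a maximum spanning diverging forest of Γ). -/
open Finset

variable {n : ℕ}

/-- Kirchhoff (Laplacian) matrix of the weighted digraph whose arc `(j, i)`
has weight `a i j` (so `a i j` is the weight with which agent `i` accounts for `j`). -/
noncomputable def kirchhoff (a : Matrix (Fin n) (Fin n) ℝ) : Matrix (Fin n) (Fin n) ℝ :=
  Matrix.of fun i j => if i = j then ∑ k ∈ Finset.univ.erase i, a i k else -a i j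

/-- `F` is a spanning diverging forest (out-forest) of the digraph with arcs
`u → v` present iff `a v u > 0`: every arc of `F` is an arc of the digraph,
every vertex has in-degree at most one in `F`, and `F` has no directed cycles
(equivalently, no infinite directed walk). -/
def IsOutForest (a : Matrix (Fin n) (Fin n) ℝ) (F : Finset (Fin n × Fin n)) : Prop :=
  (∀ e ∈ F, 0 < a e.2 e.1) ∧
  (∀ u u' v : Fin n, (u, v) ∈ F → (u', v) ∈ F → u = u') ∧
  ¬ ∃ f : ℕ → Fin n, ∀ k, (f k, f (k + 1)) ∈ F

/-- Number of arcs of a maximum out-forest. -/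
noncomputable def maxForestSize (a : Matrix (Fin n) (Fin n) ℝ) : ℕ :=
  sSup {k | ∃ F, IsOutForest a F ∧ F.card = k}

/-- The out-forest dimension: the number of trees in any maximum out-forest. -/
noncomputable def outForestDim (a : Matrix (Fin n) (Fin n) ℝ) : ℕ :=
  n - maxForestSize a

open Classical in
/-- The set of maximum out-forests. -/
noncomputable def maxForests (a : Matrix (Fin n) (Fin n) ℝ) :
    Finset (Finset (Fin n × Fin n)) :=
  Finset.univ.filter fun F => IsOutForest a F ∧ F.card = maxForestSize a

/-- The weight of a forest: the product of its arc weights. -/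
def forestWeight (a : Matrix (Fin n) (Fin n) ℝ) (F : Finset (Fin n × Fin n)) : ℝ :=
  ∏ e ∈ F, a e.2 e.1

/-- In forest `F`, vertex `i` belongs to the tree diverging from (rooted at) `j`. -/
def InTreeRootedAt (F : Finset (Fin n × Fin n)) (j i : Fin n) : Prop :=
  (∀ u, (u, j) ∉ F) ∧ Relation.ReflTransGen (fun x y => (x, y) ∈ F) j i

open Classical in
/-- The normalized matrix of maximum out-forests. -/
noncomputable def barJ (a : Matrix (Fin n) (Fin n) ℝ) : Matrix (Fin n) (Fin n) ℝ :=
  Matrix.of fun i j =>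
    (∑ F ∈ (maxForests a).filter (fun F => InTreeRootedAt F j i), forestWeight a F) /
    (∑ F ∈ maxForests a, forestWeight a F)

/-- Reachability by directed paths (arc `u → v` present iff `a v u > 0`). -/
def Reach (a : Matrix (Fin n) (Fin n) ℝ) (u v : Fin n) : Prop :=
  Relation.ReflTransGen (fun x y => 0 < a y x) u v

/-- The strong component (bicomponent) of vertex `v`. -/
def strongClass (a : Matrix (Fin n) (Fin n) ℝ) (v : Fin n) : Set (Fin n) :=
  {u | Reach a u v ∧ Reach a v u}

/-- The set of strong components. -/
def strongClasses (a : Matrix (Fin n) (Fin n) ℝ) : Set (Set (Fin n)) :=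
  {S | ∃ v, S = strongClass a v}

/-- Basis bicomponents: strong components with no arcs entering from outside. -/
def basisClasses (a : Matrix (Fin n) (Fin n) ℝ) : Set (Set (Fin n)) :=
  {S | (∃ v, S = strongClass a v) ∧ ∀ u v, u ∉ S → v ∈ S → ¬ 0 < a v u}

/-- Weak reachability (underlying undirected graph). -/
def WeakReach (a : Matrix (Fin n) (Fin n) ℝ) (u v : Fin n) : Prop :=
  Relation.ReflTransGen (fun x y => 0 < a y x ∨ 0 < a x y) u v

/-- The set of weak components. -/
def weakClasses (a : Matrix (Fin n) (Fin n) ℝ) : Set (Set (Fin n)) :=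
  {S | ∃ v, S = {u | WeakReach a u v}}


/-!
Write `m` for the number of arcs of a maximum out-forest. Row `i` of `L` is
`∑ₖ a i k • (eᵢ - eₖ)`, a combination of the incidence vectors of the arcs entering `i`.

`rank L ≤ m`: given `rank L` independent rows, one term can be picked from each row so that the
picked incidence vectors `eᵢ - e_{p i}` stay independent (replace the rows one at a time). A
directed cycle among the arcs `p i → i` would make their incidence vectors sum to zero, so these
arcs form an out-forest.

`m ≤ rank L`: for a maximum out-forest, the columns of `L` indexed by the non-root vertices are
independent by a maximum principle. A kernel vector supported on the non-roots attains its
positive maximum on a set of non-roots; some forest arc enters that set from outside, and the row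
of `L x` at its head is then positive.
-/

section IndependentRepresentatives

open Submodule Function

variable {ι K V : Type*} [DivisionRing K] [AddCommGroup V] [Module K V]

theorem LinearIndependent.update_of_notMem_span [DecidableEq ι] {v : ι → V}
    (hv : LinearIndependent K v) (i : ι) {x : V} (hx : x ∉ span K (v '' {i}ᶜ)) :
    LinearIndependent K (Function.update v i x) := by
  have hrest : Set.EqOn v (Function.update v i x) {i}ᶜ := fun j hj => (update_of_ne hj _ _).symm
  rw [← linearIndepOn_univ_iff, ← Set.insert_sdiff_self_of_mem (Set.mem_univ i),
    ← Set.compl_eq_univ_sdiff,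
    linearIndepOn_insert (Set.notMem_compl_iff.2 (Set.mem_singleton i))]
  refine ⟨(hv.linearIndepOn_univ.mono (Set.subset_univ _)).congr hrest, ?_⟩
  rwa [update_self, ← Set.image_congr hrest]

theorem LinearIndependent.exists_update_mem_of_mem_span [DecidableEq ι] {v : ι → V}
    (hv : LinearIndependent K v) (i : ι) {S : Set V} (hS : v i ∈ span K S) :
    ∃ x ∈ S, LinearIndependent K (Function.update v i x) := by
  by_contra! h
  have hsub : S ⊆ span K (v '' {i}ᶜ) := fun x hx => by
    by_contra hx'
    exact h x hx (hv.update_of_notMem_span i hx')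
  exact hv.notMem_span_image (Set.notMem_compl_iff.2 (Set.mem_singleton i)) (span_le.2 hsub hS)

theorem LinearIndependent.exists_linearIndependent_of_mem_span [Finite ι] {v : ι → V}
    (hv : LinearIndependent K v) {S : ι → Set V} (hS : ∀ i, v i ∈ span K (S i)) :
    ∃ w : ι → V, (∀ i, w i ∈ S i) ∧ LinearIndependent K w := by
  classical
  cases nonempty_fintype ι
  suffices ∀ s : Finset ι, ∃ w : ι → V, (∀ i ∈ s, w i ∈ S i) ∧ (∀ i ∉ s, w i = v i) ∧
      LinearIndependent K w by
    obtain ⟨w, hw, -, hli⟩ := this Finset.univ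
    exact ⟨w, fun i => hw i (Finset.mem_univ i), hli⟩
  intro s
  induction s using Finset.induction_on with
  | empty => exact ⟨v, by simp, fun _ _ => rfl, hv⟩
  | insert j s hj ih =>
    obtain ⟨w, hwS, hwv, hw⟩ := ih
    obtain ⟨x, hxS, hx⟩ := hw.exists_update_mem_of_mem_span j (hwv j hj ▸ hS j)
    refine ⟨Function.update w j x, fun i hi => ?_, fun i hi => ?_, hx⟩
    · rcases eq_or_ne i j with rfl | hij
      · rwa [update_self]
      · rw [update_of_ne hij]
        exact hwS i ((Finset.mem_insert.1 hi).resolve_left hij)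
    · obtain ⟨hij, his⟩ := not_or.1 (Finset.mem_insert.not.1 hi)
      rw [update_of_ne hij, hwv i his]

end IndependentRepresentatives

section ArcVectors

variable {V κ : Type*} [DecidableEq V]

def arcVector (e : V × V) : V → ℝ :=
  Pi.single e.2 1 - Pi.single e.1 1

theorem not_exists_walk_of_linearIndependent_arcVector [Finite κ] {g : κ → V × V}
    (hg : LinearIndependent ℝ (arcVector ∘ g)) :
    ¬ ∃ f : ℕ → V, ∀ k, (f k, f (k + 1)) ∈ Set.range g := by
  classical
  cases nonempty_fintype κ
  rintro ⟨f, hf⟩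
  choose e he using hf
  obtain ⟨i, j, hij, heij⟩ : ∃ i j, i < j ∧ e i = e j := by
    obtain ⟨x, y, hxy, h⟩ := Finite.exists_ne_map_eq_of_infinite e
    rcases hxy.lt_or_gt with h' | h'
    exacts [⟨x, y, h', h⟩, ⟨y, x, h', h.symm⟩]
  have hfij : f i = f j := congrArg Prod.fst ((he i).symm.trans (heij ▸ he j))
  -- a closed walk telescopes to a vanishing combination of its arcs
  have hclosed : ∑ k ∈ Ico i j, arcVector (g (e k)) = 0 := by
    simp only [he, arcVector]
    rw [Finset.sum_Ico_sub (fun k => (Pi.single (f k) 1 : V → ℝ)) hij.le, hfij, sub_self]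
  set c : κ → ℝ := fun x => ((Ico i j).filter (e · = x)).card
  have hc : ∑ x, c x • arcVector (g x) = 0 := by
    rw [← hclosed, ← Finset.sum_fiberwise (Ico i j) e]
    refine Finset.sum_congr rfl fun x _ => ?_
    rw [Finset.sum_congr rfl fun k hk => by rw [(Finset.mem_filter.1 hk).2], Finset.sum_const,
      Nat.cast_smul_eq_nsmul]
  have hpos : 0 < c (e i) := by
    simp only [c, Nat.cast_pos, Finset.card_pos]
    exact ⟨i, Finset.mem_filter.2 ⟨Finset.mem_Ico.2 ⟨le_rfl, hij⟩, rfl⟩⟩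
  exact hpos.ne' (Fintype.linearIndependent_iff.1 hg c hc (e i))

end ArcVectors

section Kirchhoff

open Matrix

variable {a : Matrix (Fin n) (Fin n) ℝ} {F : Finset (Fin n × Fin n)}

theorem isOutForest_image_of_linearIndependent {κ : Type*} [Fintype κ] {p r : κ → Fin n}
    (hr : Function.Injective r) (hpos : ∀ i, 0 < a (r i) (p i))
    (hli : LinearIndependent ℝ fun i => arcVector (p i, r i)) :
    IsOutForest a (univ.image fun i => (p i, r i)) := by
  refine ⟨?_, ?_, ?_⟩
  · simp only [mem_image, mem_univ, true_and, forall_exists_index]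
    rintro _ i rfl
    exact hpos i
  · simp only [mem_image, mem_univ, true_and, forall_exists_index, Prod.mk.injEq, and_imp]
    rintro u u' v i rfl rfl i' rfl hii'
    rw [hr hii']
  · rintro ⟨f, hf⟩
    exact not_exists_walk_of_linearIndependent_arcVector hli ⟨f, fun k => by simpa using hf k⟩

theorem isOutForest_empty (a : Matrix (Fin n) (Fin n) ℝ) : IsOutForest a ∅ :=
  ⟨by simp, by simp, by simp⟩

theorem bddAbove_forestSizes (a : Matrix (Fin n) (Fin n) ℝ) :
    BddAbove {k | ∃ F, IsOutForest a F ∧ F.card = k} :=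
  ⟨Fintype.card (Fin n × Fin n), by rintro _ ⟨F, -, rfl⟩; exact card_le_univ F⟩

theorem IsOutForest.card_le_maxForestSize (hF : IsOutForest a F) : F.card ≤ maxForestSize a :=
  le_csSup (bddAbove_forestSizes a) ⟨F, hF, rfl⟩

theorem exists_isOutForest_card_eq_maxForestSize (a : Matrix (Fin n) (Fin n) ℝ) :
    ∃ F, IsOutForest a F ∧ F.card = maxForestSize a :=
  Nat.sSup_mem (s := {k | ∃ F, IsOutForest a F ∧ F.card = k}) ⟨0, ∅, isOutForest_empty a, rfl⟩
    (bddAbove_forestSizes a)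

theorem IsOutForest.injOn_snd (hF : IsOutForest a F) :
    Set.InjOn Prod.snd (F : Set (Fin n × Fin n)) := by
  rintro ⟨u, v⟩ he ⟨u', v'⟩ he' (rfl : v = v')
  rw [hF.2.1 u u' v he he']

theorem IsOutForest.wellFounded (hF : IsOutForest a F) : WellFounded fun u v => (u, v) ∈ F := by
  have hchild : WellFounded fun v u => (u, v) ∈ F :=
    wellFounded_iff_isEmpty_descending_chain.2 ⟨fun ⟨f, hf⟩ => hF.2.2 ⟨f, hf⟩⟩
  have : Std.Irrefl (Relation.TransGen fun u v => (u, v) ∈ F) :=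
    ⟨fun u h => hchild.transGen.irrefl.irrefl u (Relation.transGen_swap.2 h)⟩
  exact Subrelation.wf (r := Relation.TransGen fun u v => (u, v) ∈ F) (fun h => .single h)
    (Finite.wellFounded_of_trans_of_irrefl _)

theorem IsOutForest.exists_arc_into (hF : IsOutForest a F) {S : Finset (Fin n)}
    (hS : S ⊆ F.image Prod.snd) (hne : S.Nonempty) : ∃ i ∈ S, ∃ k ∉ S, 0 < a i k := by
  obtain ⟨i, hi, hmin⟩ := hF.wellFounded.has_min (S : Set (Fin n)) hne
  obtain ⟨⟨k, i'⟩, hkF, rfl⟩ := mem_image.1 (hS hi)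
  exact ⟨_, hi, k, fun hk => hmin k hk hkF, hF.1 _ hkF⟩

theorem kirchhoff_row (a : Matrix (Fin n) (Fin n) ℝ) (i : Fin n) :
    (kirchhoff a).row i = ∑ k ∈ univ.erase i, a i k • arcVector (k, i) := by
  ext j
  rcases eq_or_ne i j with rfl | hij
  · simp [Matrix.row, kirchhoff, arcVector, Pi.single_apply, mul_sub, Finset.sum_sub_distrib]
  · simp [Matrix.row, kirchhoff, arcVector, Pi.single_apply, hij, hij.symm]

theorem kirchhoff_mulVec_apply (a : Matrix (Fin n) (Fin n) ℝ) (x : Fin n → ℝ) (i : Fin n) :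
    (kirchhoff a *ᵥ x) i = ∑ k ∈ univ.erase i, a i k * (x i - x k) := by
  change (kirchhoff a).row i ⬝ᵥ x = _
  rw [kirchhoff_row, sum_dotProduct]
  simp [arcVector, smul_dotProduct, sub_dotProduct]

theorem nonpos_of_kirchhoff_mulVec_eq_zero (hnn : ∀ i j, 0 ≤ a i j) {W : Finset (Fin n)}
    (hW : ∀ S ⊆ W, S.Nonempty → ∃ i ∈ S, ∃ k ∉ S, 0 < a i k) {x : Fin n → ℝ}
    (hxW : ∀ i ∉ W, x i = 0) (hx : kirchhoff a *ᵥ x = 0) (i : Fin n) : x i ≤ 0 := by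
  by_contra! hi
  obtain ⟨i₀, -, hmax⟩ := exists_max_image univ x ⟨i, mem_univ i⟩
  have hM : 0 < x i₀ := hi.trans_le (hmax i (mem_univ i))
  set S := univ.filter fun j => x j = x i₀
  have hSW : S ⊆ W := fun j hj => by
    by_contra hjW
    have hxj : x j = x i₀ := (mem_filter.1 hj).2
    rw [hxW j hjW] at hxj
    exact hM.ne hxj
  obtain ⟨j, hjS, k, hkS, hjk⟩ := hW S hSW ⟨i₀, by simp [S]⟩
  have hxj : x j = x i₀ := (mem_filter.1 hjS).2
  have hxk : x k < x i₀ := (hmax k (mem_univ k)).lt_of_ne fun h => hkS (by simp [S, h])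
  -- at a maximum the row of `L x` is a sum of nonnegative terms, one of them positive
  have hpos : 0 < (kirchhoff a *ᵥ x) j := by
    rw [kirchhoff_mulVec_apply]
    refine lt_of_lt_of_le ?_ (single_le_sum (fun l _ => mul_nonneg (hnn j l) ?_)
      (mem_erase.2 ⟨fun h => hkS (by rwa [h]), mem_univ k⟩))
    · exact mul_pos hjk (by linarith)
    · linarith [hmax l (mem_univ l)]
  rw [hx] at hpos
  exact hpos.false

theorem eq_zero_of_kirchhoff_mulVec_eq_zero (hnn : ∀ i j, 0 ≤ a i j) {W : Finset (Fin n)}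
    (hW : ∀ S ⊆ W, S.Nonempty → ∃ i ∈ S, ∃ k ∉ S, 0 < a i k) {x : Fin n → ℝ}
    (hxW : ∀ i ∉ W, x i = 0) (hx : kirchhoff a *ᵥ x = 0) : x = 0 := by
  funext i
  refine le_antisymm (nonpos_of_kirchhoff_mulVec_eq_zero hnn hW hxW hx i) ?_
  have := nonpos_of_kirchhoff_mulVec_eq_zero hnn hW (x := -x) (by simpa using hxW)
    (by rw [mulVec_neg, hx, neg_zero]) i
  simpa using this

theorem IsOutForest.card_le_rank_kirchhoff (hnn : ∀ i j, 0 ≤ a i j) (hF : IsOutForest a F) :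
    F.card ≤ (kirchhoff a).rank := by
  classical
  set W := F.image Prod.snd
  set B := (kirchhoff a).submatrix id ((↑) : W → Fin n)
  have hB : LinearIndependent ℝ B.col := by
    rw [← mulVec_injective_iff, ← coe_mulVecLin, ← LinearMap.ker_eq_bot, LinearMap.ker_eq_bot']
    intro c hc
    set x : Fin n → ℝ := fun j => if h : j ∈ W then c ⟨j, h⟩ else 0
    have hx : kirchhoff a *ᵥ x = B *ᵥ c := by
      ext i
      simp only [mulVec, dotProduct, B, x, submatrix_apply, id, mul_dite, mul_zero]
      rw [← sum_subset (subset_univ W) fun j _ hj => dif_neg hj, ← sum_coe_sort W]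
      exact sum_congr rfl fun j _ => dif_pos j.2
    have := eq_zero_of_kirchhoff_mulVec_eq_zero hnn (fun S hS hne => hF.exists_arc_into hS hne)
      (x := x) (fun j hj => dif_neg hj) (hx.trans hc)
    ext ⟨j, hj⟩
    simpa [x, hj] using congrFun this j
  calc F.card = Fintype.card W := by rw [Fintype.card_coe, card_image_of_injOn hF.injOn_snd]
    _ = B.rank := by rw [← rank_transpose, hB.rank_matrix]
    _ ≤ (kirchhoff a).rank := rank_submatrix_le _ _ _

theorem rank_kirchhoff_le_maxForestSize (hnn : ∀ i j, 0 ≤ a i j) :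
    (kirchhoff a).rank ≤ maxForestSize a := by
  classical
  obtain ⟨κ, r, hr, hspan, hli⟩ := exists_linearIndependent' ℝ (kirchhoff a).row
  have : Finite κ := Finite.of_injective r hr
  cases nonempty_fintype κ
  have hrow : ∀ i, (kirchhoff a).row i ∈
      Submodule.span ℝ ((fun k => arcVector (k, i)) '' {k | 0 < a i k}) := by
    intro i
    rw [kirchhoff_row]
    refine Submodule.sum_mem _ fun k _ => ?_
    rcases (hnn i k).lt_or_eq with h | h
    · exact Submodule.smul_mem _ _ (Submodule.subset_span ⟨k, h, rfl⟩)
    · rw [← h, zero_smul]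
      exact Submodule.zero_mem _
  obtain ⟨w, hwS, hw⟩ := hli.exists_linearIndependent_of_mem_span fun i => hrow (r i)
  choose p hp hpw using hwS
  have hF := isOutForest_image_of_linearIndependent hr hp (by simpa only [hpw] using hw)
  calc (kirchhoff a).rank = Module.finrank ℝ (Submodule.span ℝ (Set.range (kirchhoff a).row)) :=
        rank_eq_finrank_span_row _
    _ = Fintype.card κ := by rw [← hspan, finrank_span_eq_card hli]
    _ = (univ.image fun i => (p i, r i)).card := by
        rw [card_image_of_injective _ fun i j h => hr (congrArg Prod.snd h), card_univ]
    _ ≤ maxForestSize a := hF.card_le_maxForestSize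

end Kirchhoff

/-- The rank of the Kirchhoff matrix of a weighted digraph on `n` vertices
equals `n − d`, where `d` is the out-forest dimension. -/
theorem kirchhoff_rank_eq {n : ℕ} (a : Matrix (Fin n) (Fin n) ℝ)
    (hnn : ∀ i j, 0 ≤ a i j) :
    (kirchhoff a).rank = n - outForestDim a := by
  obtain ⟨F, hF, hFcard⟩ := exists_isOutForest_card_eq_maxForestSize a
  have hrank : (kirchhoff a).rank = maxForestSize a :=
    (rank_kirchhoff_le_maxForestSize hnn).antisymm (hFcard ▸ hF.card_le_rank_kirchhoff hnn)
  have hle : (kirchhoff a).rank ≤ n := by simpa using Matrix.rank_le_card_width (kirchhoff a)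
  rw [outForestDim, ← hrank]
  omega
end

section
/- If Γ has a spanning diverging tree, then for every initial condition x(0), the solution of ẋ(t) = −L x(t) converges as t → ∞ to a vector with all components equal. -/
open Finset

variable {n : ℕ}

/-!
Write `-L = B - c • 1` with `B` entrywise nonnegative: then `P t = exp (-t L)` is a positive
multiple of `exp (t B)`, hence entrywise nonnegative for `t ≥ 0`, and its rows sum to `1`
because `L 1 = 0`. The solution is `x (t + s) = P s x t`, so every `x (t + s) i` is an average
of the `x t j`: the minimum of the coordinates increases and the maximum decreases. If `r` is the
root of a spanning diverging tree, every vertex is reachable from `r`, which makes the column `r`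
of `P 1` strictly positive, say `≥ δ > 0`; Doeblin's argument then shrinks `max - min` by the
factor `1 - δ` over each unit of time, so minimum and maximum have a common limit.
-/

open Filter Topology
open scoped Matrix

theorem wellFounded_of_not_exists_walk {α : Type*} [Finite α] {R : α → α → Prop}
    (h : ¬∃ f : ℕ → α, ∀ k, R (f k) (f (k + 1))) : WellFounded R := by
  have hwf : WellFounded (flip R) :=
    wellFounded_iff_isEmpty_descending_chain.2 ⟨fun f => h ⟨f.1, f.2⟩⟩
  have : Std.Irrefl (Relation.TransGen R) :=
    ⟨fun x hx => hwf.transGen.irrefl.irrefl x (Relation.transGen_swap.2 hx)⟩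
  exact Subrelation.wf Relation.TransGen.single (Finite.wellFounded_of_trans_of_irrefl _)

theorem exists_forall_reflTransGen_of_card_eq {α : Type*} [Fintype α] [Nonempty α]
    {F : Finset (α × α)} (hin : ∀ u u' v, (u, v) ∈ F → (u', v) ∈ F → u = u')
    (hacyc : ¬∃ f : ℕ → α, ∀ k, (f k, f (k + 1)) ∈ F)
    (hcard : #F = Fintype.card α - 1) :
    ∃ r, ∀ i, Relation.ReflTransGen (fun u v => (u, v) ∈ F) r i := by
  classical
  have hanc : ∀ i, ∃ r ∉ F.image Prod.snd,
      Relation.ReflTransGen (fun u v => (u, v) ∈ F) r i := by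
    intro i
    induction i using
      (wellFounded_of_not_exists_walk (R := fun u v => (u, v) ∈ F) hacyc).induction with
    | _ i ih =>
      by_cases hpar : i ∈ F.image Prod.snd
      · obtain ⟨⟨u, _⟩, hu, rfl⟩ := mem_image.1 hpar
        obtain ⟨r, hr, hru⟩ := ih u hu
        exact ⟨r, hr, hru.tail hu⟩
      · exact ⟨i, hpar, .refl⟩
  have hheads : #(F.image Prod.snd) = Fintype.card α - 1 := by
    refine (card_image_of_injOn fun e he e' he' h => Prod.ext ?_ h).trans hcard
    exact hin _ _ _ (mem_coe.1 he) (by simpa [h] using mem_coe.1 he')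
  obtain ⟨r, hr⟩ : ∃ r, (F.image Prod.snd)ᶜ = {r} := by
    refine card_eq_one.1 ?_
    have := Fintype.card_pos (α := α)
    rw [card_compl, hheads]
    omega
  refine ⟨r, fun i => ?_⟩
  obtain ⟨r', hr', hr'i⟩ := hanc i
  have : r' ∈ ({r} : Finset α) := hr ▸ mem_compl.2 hr'
  rwa [← mem_singleton.1 this]

namespace Matrix

variable {ι : Type*} [Fintype ι] [DecidableEq ι]

section Stochastic

variable {P : Matrix ι ι ℝ}

theorem mulVec_apply_sub_eq_sum (hP : P ∈ rowStochastic ℝ ι) (v : ι → ℝ) (c : ℝ) (i : ι) :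
    (P *ᵥ v) i - c = ∑ j, P i j * (v j - c) := by
  simp only [mulVec, dotProduct, mul_sub, sum_sub_distrib, ← sum_mul,
    sum_row_of_mem_rowStochastic hP, one_mul]

theorem mul_sub_le_mulVec_apply_sub (hP : P ∈ rowStochastic ℝ ι) {v : ι → ℝ} {c δ : ℝ}
    (hc : ∀ j, c ≤ v j) {i r : ι} (hδ : δ ≤ P i r) :
    δ * (v r - c) ≤ (P *ᵥ v) i - c := by
  rw [mulVec_apply_sub_eq_sum hP]
  calc δ * (v r - c) ≤ P i r * (v r - c) := by gcongr; linarith [hc r]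
    _ ≤ ∑ j, P i j * (v j - c) :=
      single_le_sum (f := fun j => P i j * (v j - c))
        (fun j _ => mul_nonneg (nonneg_of_mem_rowStochastic hP) (sub_nonneg.2 (hc j)))
        (mem_univ r)

theorem mul_sub_le_sub_mulVec_apply (hP : P ∈ rowStochastic ℝ ι) {v : ι → ℝ} {C δ : ℝ}
    (hC : ∀ j, v j ≤ C) {i r : ι} (hδ : δ ≤ P i r) :
    δ * (C - v r) ≤ C - (P *ᵥ v) i := by
  have := mul_sub_le_mulVec_apply_sub hP (v := -v) (c := -C) (fun j => neg_le_neg (hC j)) hδ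
  simp only [mulVec_neg, Pi.neg_apply] at this
  linarith

theorem le_mulVec_apply (hP : P ∈ rowStochastic ℝ ι) {v : ι → ℝ} {c : ℝ} (hc : ∀ j, c ≤ v j)
    (i : ι) : c ≤ (P *ᵥ v) i := by
  simpa using mul_sub_le_mulVec_apply_sub hP hc (nonneg_of_mem_rowStochastic hP (j := i))

theorem mulVec_apply_le (hP : P ∈ rowStochastic ℝ ι) {v : ι → ℝ} {C : ℝ} (hC : ∀ j, v j ≤ C)
    (i : ι) : (P *ᵥ v) i ≤ C := by
  simpa using mul_sub_le_sub_mulVec_apply hP hC (nonneg_of_mem_rowStochastic hP (j := i))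

theorem sup'_mulVec_sub_inf'_mulVec_le [Nonempty ι] (hP : P ∈ rowStochastic ℝ ι) (v : ι → ℝ)
    {δ : ℝ} {r : ι} (hδ : ∀ i, δ ≤ P i r) :
    univ.sup' univ_nonempty (P *ᵥ v) - univ.inf' univ_nonempty (P *ᵥ v) ≤
      (1 - δ) * (univ.sup' univ_nonempty v - univ.inf' univ_nonempty v) := by
  have hle : ∀ j, v j ≤ univ.sup' univ_nonempty v := fun j => le_sup' v (mem_univ j)
  have hge : ∀ j, univ.inf' univ_nonempty v ≤ v j := fun j => inf'_le v (mem_univ j)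
  have hsup : univ.sup' univ_nonempty (P *ᵥ v) ≤
      univ.sup' univ_nonempty v - δ * (univ.sup' univ_nonempty v - v r) :=
    sup'_le _ _ fun i _ => by linarith [mul_sub_le_sub_mulVec_apply hP hle (hδ i)]
  have hinf : univ.inf' univ_nonempty v + δ * (v r - univ.inf' univ_nonempty v) ≤
      univ.inf' univ_nonempty (P *ᵥ v) :=
    le_inf' _ _ fun i _ => by linarith [mul_sub_le_mulVec_apply_sub hP hge (hδ i)]
  linarith

end Stochastic

section Exponential

attribute [local instance] Matrix.linftyOpNormedRing Matrix.linftyOpNormedAlgebra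

open NormedSpace

theorem hasSum_exp_apply (A : Matrix ι ι ℝ) (i j : ι) :
    HasSum (fun k : ℕ => (k.factorial : ℝ)⁻¹ * (A ^ k) i j) (exp A i j) :=
  (exp_series_hasSum_exp' (𝕂 := ℝ) A).map (entryLinearMap ℝ ℝ i j)
    (LinearMap.continuous_of_finiteDimensional _)

theorem exp_apply_nonneg {B : Matrix ι ι ℝ} (hB : ∀ i j, 0 ≤ B i j) (i j : ι) :
    0 ≤ exp B i j :=
  (hasSum_exp_apply B i j).nonneg fun k => mul_nonneg (by positivity) (pow_apply_nonneg hB k i j)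

theorem exp_apply_pos_of_pow_apply_pos {B : Matrix ι ι ℝ} (hB : ∀ i j, 0 ≤ B i j) {i j : ι}
    {k : ℕ} (hk : 0 < (B ^ k) i j) : 0 < exp B i j :=
  (mul_pos (by positivity) hk).trans_le <| le_hasSum (hasSum_exp_apply B i j) k
    fun k' _ => mul_nonneg (by positivity) (pow_apply_nonneg hB k' i j)

theorem exists_pow_apply_pos_of_reflTransGen {B : Matrix ι ι ℝ} (hB : ∀ i j, 0 ≤ B i j)
    {i j : ι} (h : Relation.ReflTransGen (fun u v => 0 < B v u) j i) :
    ∃ k, 0 < (B ^ k) i j := by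
  induction h with
  | refl => exact ⟨0, by simp⟩
  | @tail u v _ huv ih =>
    obtain ⟨k, hk⟩ := ih
    refine ⟨k + 1, ?_⟩
    rw [pow_succ', mul_apply]
    exact sum_pos' (fun w _ => mul_nonneg (hB v w) (pow_apply_nonneg hB k w j))
      ⟨u, mem_univ u, mul_pos huv hk⟩

theorem exp_add_smul_one (A : Matrix ι ι ℝ) (c : ℝ) :
    exp (A + c • 1) = Real.exp c • exp A := by
  have hscalar : exp (c • 1 : Matrix ι ι ℝ) = Real.exp c • 1 := by
    rw [smul_one_eq_diagonal, exp_diagonal, smul_one_eq_diagonal]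
    congr 1
    ext
    simp [Real.exp_eq_exp_ℝ]
  rw [exp_add_of_commute _ _ ((Commute.one_right A).smul_right c), hscalar, mul_smul_one]

theorem exists_add_smul_one_nonneg {A : Matrix ι ι ℝ} (hA : ∀ i j, i ≠ j → 0 ≤ A i j) :
    ∃ c : ℝ, ∀ i j, 0 ≤ (A + c • 1) i j ∧ (0 < A i j → 0 < (A + c • 1) i j) := by
  refine ⟨1 + ∑ k, |A k k|, fun i j => ?_⟩
  rcases eq_or_ne i j with rfl | hij
  · have : |A i i| ≤ ∑ k, |A k k| :=
      single_le_sum (f := fun k => |A k k|) (fun k _ => abs_nonneg _) (mem_univ i)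
    have hpos : 0 < (A + (1 + ∑ k, |A k k|) • 1) i i := by
      simp only [add_apply, smul_apply, one_apply_eq, smul_eq_mul, mul_one]
      linarith [neg_abs_le (A i i)]
    exact ⟨hpos.le, fun _ => hpos⟩
  · simp only [add_apply, smul_apply, one_apply_ne hij, smul_zero, add_zero]
    exact ⟨hA i j hij, id⟩

theorem exp_eq_smul_exp_add_smul_one (A : Matrix ι ι ℝ) (c : ℝ) :
    exp A = Real.exp (-c) • exp (A + c • 1) := by
  rw [exp_add_smul_one, smul_smul, ← Real.exp_add, neg_add_cancel, Real.exp_zero, one_smul]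

theorem exp_apply_nonneg_of_offDiag_nonneg {A : Matrix ι ι ℝ}
    (hA : ∀ i j, i ≠ j → 0 ≤ A i j) (i j : ι) : 0 ≤ exp A i j := by
  obtain ⟨c, hc⟩ := exists_add_smul_one_nonneg hA
  rw [exp_eq_smul_exp_add_smul_one A c, smul_apply, smul_eq_mul]
  exact mul_nonneg (Real.exp_nonneg _) (exp_apply_nonneg (fun i j => (hc i j).1) i j)

theorem exp_apply_pos_of_reflTransGen {A : Matrix ι ι ℝ} (hA : ∀ i j, i ≠ j → 0 ≤ A i j)
    {i j : ι} (h : Relation.ReflTransGen (fun u v => 0 < A v u) j i) : 0 < exp A i j := by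
  obtain ⟨c, hc⟩ := exists_add_smul_one_nonneg hA
  have hB : ∀ i j, 0 ≤ (A + c • 1) i j := fun i j => (hc i j).1
  obtain ⟨k, hk⟩ := exists_pow_apply_pos_of_reflTransGen hB
    (Relation.ReflTransGen.mono (fun u v => (hc v u).2) _ _ h)
  rw [exp_eq_smul_exp_add_smul_one A c, smul_apply, smul_eq_mul]
  exact mul_pos (Real.exp_pos _) (exp_apply_pos_of_pow_apply_pos hB hk)

theorem hasDerivAt_exp_smul_mulVec (A : Matrix ι ι ℝ) (v : ι → ℝ) (t : ℝ) :
    HasDerivAt (fun t : ℝ => exp (t • A) *ᵥ v) (A *ᵥ (exp (t • A) *ᵥ v)) t := by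
  let evalAt : Matrix ι ι ℝ →L[ℝ] ι → ℝ :=
    LinearMap.toContinuousLinearMap (LinearMap.applyₗ v ∘ₗ toLin'.toLinearMap)
  rw [mulVec_mulVec]
  exact evalAt.hasFDerivAt.comp_hasDerivAt t (hasDerivAt_exp_smul_const' A t)

theorem eq_exp_smul_mulVec_of_hasDerivAt {A : Matrix ι ι ℝ} {y : ℝ → ι → ℝ}
    (hy : ∀ t, HasDerivAt y (A *ᵥ y t) t) (t s : ℝ) : y (t + s) = exp (s • A) *ᵥ y t := by
  have hsol := ODE_solution_unique_univ (v := fun _ => (A *ᵥ ·)) (s := fun _ => Set.univ)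
    (t₀ := 0) (f := fun s => y (t + s))
    (fun _ => (LinearMap.toContinuousLinearMap (mulVecLin A)).lipschitz.lipschitzOnWith)
    (fun s => ⟨(hy (t + s)).comp_const_add t s, trivial⟩)
    (fun s => ⟨hasDerivAt_exp_smul_mulVec A (y t) s, trivial⟩) (by simp)
  exact congrFun hsol s

theorem exp_smul_mulVec_one {A : Matrix ι ι ℝ} (hA : A *ᵥ 1 = 0) (t : ℝ) :
    exp (t • A) *ᵥ 1 = 1 :=
  (eq_exp_smul_mulVec_of_hasDerivAt (y := fun _ => 1)
    (fun t => hA ▸ hasDerivAt_const t 1) 0 t).symm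

theorem exp_smul_mem_rowStochastic {A : Matrix ι ι ℝ} (hA : ∀ i j, i ≠ j → 0 ≤ A i j)
    (hA1 : A *ᵥ 1 = 0) {t : ℝ} (ht : 0 ≤ t) : exp (t • A) ∈ rowStochastic ℝ ι :=
  mem_rowStochastic.2 ⟨exp_apply_nonneg_of_offDiag_nonneg
    fun i j hij => mul_nonneg ht (hA i j hij), exp_smul_mulVec_one hA1 t⟩

end Exponential

end Matrix

theorem exists_tendsto_of_monotone_of_antitone_of_gap_le {m M : ℝ → ℝ} (hm : Monotone m)
    (hM : Antitone M) (hmM : ∀ t, m t ≤ M t) {q : ℝ} (hq : q < 1)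
    (hgap : ∀ t, M (t + 1) - m (t + 1) ≤ q * (M t - m t)) :
    ∃ c, Tendsto m atTop (𝓝 c) ∧ Tendsto M atTop (𝓝 c) := by
  have hm_le : ∀ t, m t ≤ M 0 := fun t =>
    (hm (le_max_left t 0)).trans ((hmM _).trans (hM (le_max_right t 0)))
  have hM_ge : ∀ t, m 0 ≤ M t := fun t =>
    ((hm (le_max_right t 0)).trans (hmM _)).trans (hM (le_max_left t 0))
  have hm_lim := tendsto_atTop_ciSup hm ⟨M 0, Set.forall_mem_range.2 hm_le⟩
  have hM_lim := tendsto_atTop_ciInf hM ⟨m 0, Set.forall_mem_range.2 hM_ge⟩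
  set a := ⨆ t, m t
  set b := ⨅ t, M t
  have hab : a ≤ b := le_of_tendsto_of_tendsto' hm_lim hM_lim hmM
  have hshift : Tendsto (· + 1 : ℝ → ℝ) atTop atTop :=
    tendsto_atTop_add_const_right _ 1 tendsto_id
  have hba : b - a ≤ q * (b - a) :=
    le_of_tendsto_of_tendsto' ((hM_lim.comp hshift).sub (hm_lim.comp hshift))
      ((hM_lim.sub hm_lim).const_mul q) hgap
  have : b = a := by nlinarith
  exact ⟨a, hm_lim, this ▸ hM_lim⟩

theorem exists_tendsto_const_of_stochastic_flow {ι : Type*} [Fintype ι] [DecidableEq ι]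
    [Nonempty ι] {x : ℝ → ι → ℝ} {P : ℝ → Matrix ι ι ℝ}
    (hP : ∀ s, 0 ≤ s → P s ∈ Matrix.rowStochastic ℝ ι)
    (hflow : ∀ t s, 0 ≤ s → x (t + s) = P s *ᵥ x t) {r : ι} (hr : ∀ i, 0 < P 1 i r) :
    ∃ c, Tendsto x atTop (𝓝 fun _ => c) := by
  set m := fun t => univ.inf' univ_nonempty (x t)
  set M := fun t => univ.sup' univ_nonempty (x t)
  have hm : Monotone m := fun t t' htt' => le_inf' _ _ fun i _ => by
    rw [← add_sub_cancel t t', hflow t _ (sub_nonneg.2 htt')]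
    exact Matrix.le_mulVec_apply (hP _ (sub_nonneg.2 htt')) (fun j => inf'_le _ (mem_univ j)) i
  have hM : Antitone M := fun t t' htt' => sup'_le _ _ fun i _ => by
    rw [← add_sub_cancel t t', hflow t _ (sub_nonneg.2 htt')]
    exact Matrix.mulVec_apply_le (hP _ (sub_nonneg.2 htt')) (fun j => le_sup' _ (mem_univ j)) i
  have hmM : ∀ t, m t ≤ M t := fun t =>
    (inf'_le _ (mem_univ r)).trans (le_sup' _ (mem_univ r))
  set δ := univ.inf' univ_nonempty fun i => P 1 i r
  have hδ : 0 < δ := (lt_inf'_iff _).2 fun i _ => hr i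
  have hgap : ∀ t, M (t + 1) - m (t + 1) ≤ (1 - δ) * (M t - m t) := fun t => by
    simp only [m, M, hflow t 1 zero_le_one]
    exact Matrix.sup'_mulVec_sub_inf'_mulVec_le (hP 1 zero_le_one) _
      fun i => inf'_le (fun i => P 1 i r) (mem_univ i)
  obtain ⟨c, hmc, hMc⟩ :=
    exists_tendsto_of_monotone_of_antitone_of_gap_le hm hM hmM (by linarith) hgap
  exact ⟨c, tendsto_pi_nhds.2 fun i => tendsto_of_tendsto_of_tendsto_of_le_of_le hmc hMc
    (fun t => inf'_le _ (mem_univ i)) (fun t => le_sup' _ (mem_univ i))⟩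

theorem neg_kirchhoff_mulVec_one (a : Matrix (Fin n) (Fin n) ℝ) : -kirchhoff a *ᵥ 1 = 0 := by
  rw [Matrix.neg_mulVec, neg_eq_zero]
  ext i
  have hoff : ∀ j ∈ univ.erase i, kirchhoff a i j = -a i j := fun j hj => by
    simp [kirchhoff, (ne_of_mem_erase hj).symm]
  simp only [Matrix.mulVec, dotProduct, Pi.one_apply, mul_one, Pi.zero_apply]
  rw [← add_sum_erase _ _ (mem_univ i), sum_congr rfl hoff, sum_neg_distrib]
  simp [kirchhoff]

theorem neg_kirchhoff_apply_of_ne (a : Matrix (Fin n) (Fin n) ℝ) {i j : Fin n} (h : i ≠ j) :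
    (-kirchhoff a) i j = a i j := by
  simp [kirchhoff, h]

theorem IsOutForest.neg_kirchhoff_apply_pos {a : Matrix (Fin n) (Fin n) ℝ}
    {F : Finset (Fin n × Fin n)} (hF : IsOutForest a F) {u v : Fin n} (huv : (u, v) ∈ F) :
    0 < (-kirchhoff a) v u := by
  have hne : v ≠ u := fun h => hF.2.2 ⟨fun _ => u, fun _ => h ▸ huv⟩
  rw [neg_kirchhoff_apply_of_ne a hne]
  exact hF.1 _ huv

open NormedSpace in
/-- If the communication digraph has a spanning diverging tree, then every
solution of `ẋ = −Lx` converges, as `t → ∞`, to a vector with equal components. -/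
theorem consensus_convergence {n : ℕ} (hn : 0 < n) (a : Matrix (Fin n) (Fin n) ℝ)
    (hnn : ∀ i j, 0 ≤ a i j)
    (htree : ∃ F, IsOutForest a F ∧ F.card = n - 1)
    (x : ℝ → Fin n → ℝ)
    (hx : ∀ t, HasDerivAt x (-(kirchhoff a).mulVec (x t)) t) :
    ∃ c : ℝ, Filter.Tendsto x Filter.atTop (nhds fun _ => c) := by
  have : Nonempty (Fin n) := ⟨⟨0, hn⟩⟩
  obtain ⟨F, hF, hcard⟩ := htree
  obtain ⟨r, hr⟩ := exists_forall_reflTransGen_of_card_eq hF.2.1 hF.2.2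
    (by rw [hcard, Fintype.card_fin])
  have hA : ∀ i j, i ≠ j → 0 ≤ (-kirchhoff a) i j := fun i j hij =>
    (neg_kirchhoff_apply_of_ne a hij).symm ▸ hnn i j
  have hflow : ∀ t s, 0 ≤ s → x (t + s) = exp (s • -kirchhoff a) *ᵥ x t := fun t s _ =>
    Matrix.eq_exp_smul_mulVec_of_hasDerivAt (fun t => by simpa [Matrix.neg_mulVec] using hx t) t s
  refine exists_tendsto_const_of_stochastic_flow
    (fun s hs => Matrix.exp_smul_mem_rowStochastic hA (neg_kirchhoff_mulVec_one a) hs)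
    hflow (r := r) fun i => ?_
  rw [one_smul]
  exact Matrix.exp_apply_pos_of_reflTransGen hA
    (Relation.ReflTransGen.mono (fun u v => hF.neg_kirchhoff_apply_pos) _ _ (hr i))
end
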